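/- If an optimal solution (u*, λ*) of the saddle problem satisfies λ* = 0 (i.e., the inequality constraint is strictly inactive), then the regularized saddle point satisfies u*_ν = u* for every ν > 0. -/
import Mathlib


open Matrix


private lemma dot_self_nonneg' {n : ℕ} (v : Fin n → ℝ) : 0 ≤ v ⬝ᵥ v :=
  Finset.sum_nonneg fun i _ => mul_self_nonneg (v i)

/-- If the optimal multiplier vanishes (`λ* = 0`), then the regularized saddle
point satisfies `u*_ν = u*` for every `ν > 0`. -/
theorem stmt_3 {m p r : ℕ}
    (f : (Fin m → ℝ) → ℝ) (gf : (Fin m → ℝ) → (Fin m → ℝ))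
    (g : (Fin p → ℝ) → ℝ)
    (G : Matrix (Fin p) (Fin m) ℝ) (K : Matrix (Fin r) (Fin p) ℝ)
    (h : Fin p → ℝ) (e : Fin r → ℝ) (μ ν : ℝ) (hμ : 0 < μ) (hν : 0 < ν)
    -- f is μ-strongly convex with gradient gf
    (hsc : ∀ u v, f v ≥ f u + gf u ⬝ᵥ (v - u) + μ / 2 * ((v - u) ⬝ᵥ (v - u)))
    -- g is convex
    (hg : ConvexOn ℝ Set.univ g)
    (L : (Fin m → ℝ) → (Fin r → ℝ) → ℝ)
    (hL : ∀ u l, L u l = f u + g (G *ᵥ u + h) + l ⬝ᵥ (K *ᵥ (G *ᵥ u + h) - e))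
    (Lν : (Fin m → ℝ) → (Fin r → ℝ) → ℝ)
    (hLν : ∀ u l, Lν u l = L u l - ν / 2 * (l ⬝ᵥ l))
    (us : Fin m → ℝ) (ls : Fin r → ℝ) (hls : ∀ i, 0 ≤ ls i)
    (hsaddle : ∀ (u : Fin m → ℝ) (l : Fin r → ℝ), (∀ i, 0 ≤ l i) →
      L us l ≤ L us ls ∧ L us ls ≤ L u ls)
    (uν : Fin m → ℝ) (lν : Fin r → ℝ) (hlν : ∀ i, 0 ≤ lν i)
    (hsaddleν : ∀ (u : Fin m → ℝ) (l : Fin r → ℝ), (∀ i, 0 ≤ l i) →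
      Lν uν l ≤ Lν uν lν ∧ Lν uν lν ≤ Lν u lν)
    -- the inequality constraint is strictly inactive at the optimum
    (hinactive : ls = 0) :
    uν = us := by
  subst hinactive
  have h0 : ∀ i, (0:ℝ) ≤ (0 : Fin r → ℝ) i := fun i => le_refl 0
  -- L u 0 = f u + g (G u + h)
  have hL0 : ∀ u, L u 0 = f u + g (G *ᵥ u + h) := by
    intro u; rw [hL]; simp [zero_dotProduct]
  -- us minimizes φ
  have hmin : ∀ u, L us 0 ≤ L u 0 := fun u => (hsaddle u 0 h0).2
  -- φ(uν) = φ(us)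
  have hB : L uν 0 ≤ L us 0 := by
    have h1 : Lν uν 0 ≤ Lν uν lν := (hsaddleν us 0 h0).1
    have h2 : Lν uν lν ≤ Lν us lν := (hsaddleν us 0 h0).2
    have h3 : L us lν ≤ L us 0 := (hsaddle us lν hlν).1
    have h4 : Lν uν 0 = L uν 0 := by rw [hLν]; simp [zero_dotProduct]
    have h5 : Lν us lν = L us lν - ν / 2 * (lν ⬝ᵥ lν) := hLν us lν
    have h6 : 0 ≤ lν ⬝ᵥ lν := dot_self_nonneg' lν
    nlinarith
  have hEq : L uν 0 = L us 0 := le_antisymm hB (hmin uν)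
  -- midpoint
  set w : Fin m → ℝ := (1/2 : ℝ) • us + (1/2 : ℝ) • uν with hwdef
  set d : Fin m → ℝ := us - uν with hddef
  have hw1 : us - w = (1/2 : ℝ) • d := by
    funext i; simp [hwdef, hddef]; ring
  have hw2 : uν - w = -((1/2 : ℝ) • d) := by
    funext i; simp [hwdef, hddef]; ring
  -- strong convexity at w
  have hs1 := hsc w us
  have hs2 := hsc w uν
  rw [hw1] at hs1
  rw [hw2] at hs2
  have hdot1 : gf w ⬝ᵥ ((1/2 : ℝ) • d) = (1/2) * (gf w ⬝ᵥ d) := by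
    rw [dotProduct_smul]; simp
  have hdot2 : gf w ⬝ᵥ (-((1/2 : ℝ) • d)) = -((1/2) * (gf w ⬝ᵥ d)) := by
    rw [dotProduct_neg, dotProduct_smul]; simp
  have hdot3 : ((1/2 : ℝ) • d) ⬝ᵥ ((1/2 : ℝ) • d) = (1/4) * (d ⬝ᵥ d) := by
    rw [smul_dotProduct, dotProduct_smul]; simp; ring
  have hdot4 : (-((1/2 : ℝ) • d)) ⬝ᵥ (-((1/2 : ℝ) • d)) = (1/4) * (d ⬝ᵥ d) := by
    rw [neg_dotProduct, dotProduct_neg, neg_neg, hdot3]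
  -- convexity of g at the midpoint
  have hGw : G *ᵥ w + h = (1/2 : ℝ) • (G *ᵥ us + h) + (1/2 : ℝ) • (G *ᵥ uν + h) := by
    rw [hwdef, Matrix.mulVec_add, Matrix.mulVec_smul, Matrix.mulVec_smul]
    funext i; simp; ring
  have hgc : g (G *ᵥ w + h) ≤ (1/2) * g (G *ᵥ us + h) + (1/2) * g (G *ᵥ uν + h) := by
    have := hg.2 (Set.mem_univ (G *ᵥ us + h)) (Set.mem_univ (G *ᵥ uν + h))
      (by norm_num : (0:ℝ) ≤ 1/2) (by norm_num : (0:ℝ) ≤ 1/2) (by norm_num)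
    rw [hGw]
    simpa using this
  -- combine
  have hminw := hmin w
  rw [hL0, hL0] at hminw
  rw [hL0, hL0] at hEq
  have hdd : 0 ≤ d ⬝ᵥ d := dot_self_nonneg' d
  have hzero : d ⬝ᵥ d = 0 := by nlinarith [hs1, hs2]
  have hd0 : d = 0 := by
    rwa [dotProduct_self_eq_zero] at hzero
  have : us = uν := by
    have := sub_eq_zero.mp hd0
    exact this
  exact this.symm
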